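/- Let P be a projective geometry, P' a hyperplane of P, Δ a nonempty simple graph, z' : E(Δ) → P' a projective representation of the graphic matroid G(Δ), ê_0 ∈ P∖P', and Ê ⊆ Ê(Δ, ê_0)∖{ê_0}. Then the class of balanced circles of the constructed graph is a linear class, so Ω_0(Ê) is a biased graph, and the correspondence e ↦ ê, e_0 ↦ ê_0 is a matroid isomorphism L_0(Ω_0(Ê)) ≅ M(Ê ∪ {ê_0}). -/

import Mathlib

/-!
Each edge point `ê` lies on the line joining `e₀` to the point `z'(e)` of `P'`, so adjoining
`e₀` to a set of edge points gives the same span as adjoining it to their feet `z'(e)`. As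
`e₀ ∉ P'`, this yields `rk (Ŝ ∪ {e₀}) = rk_{G(Δ)} S + 1 = #N - c(S) + 1` for every edge set `S`.
What remains is that a balanced `S` does not span `e₀`: a minimal balanced set spanning `e₀`
would be independent with graphic nullity one, hence a circle, and balanced circles do not
span `e₀`. Linearity of the balanced class comes from submodularity of the rank on a theta
graph, the rank of a connected edge set being determined by its number of nodes.
-/

open scoped Classical

/-! ## Graphs with parallel links and half edges -/

/-- A multigraph: each edge has a finite set of endpoints
(one endpoint for a half edge, two endpoints for a link). -/
structure MGraph (N : Type*) (E : Type*) where
  ends : E → Finset N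

namespace MGraph

variable {N E : Type*} (G : MGraph N E)

/-- A link has two distinct endpoints. -/
def IsLink (e : E) : Prop := (G.ends e).card = 2

/-- A half edge has exactly one endpoint. -/
def IsHalfEdge (e : E) : Prop := (G.ends e).card = 1

/-- The set of nodes of a set of edges. -/
def nodeSet (S : Set E) : Set N := {v | ∃ e ∈ S, v ∈ G.ends e}

/-- The nodes of a finite set of edges. -/
noncomputable def nodesOf (S : Finset E) : Finset N := S.biUnion G.ends

/-- The degree of a node in a finite edge set. -/
noncomputable def degreeIn (S : Finset E) (v : N) : ℕ :=
  (S.filter (fun e => v ∈ G.ends e)).card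

/-- Two nodes joined by an edge of `S`. -/
def adjIn (S : Set E) (u v : N) : Prop := ∃ e ∈ S, u ∈ G.ends e ∧ v ∈ G.ends e

/-- Connectivity of nodes through edges of `S`. -/
def nodeConn (S : Set E) : N → N → Prop := Relation.ReflTransGen (G.adjIn S)

/-- The components of the spanning subgraph `(N, S)`, as sets of nodes. -/
def components (S : Set E) : Set (Set N) := {W | ∃ v : N, W = {u | G.nodeConn S u v}}

/-- The number of components of the spanning subgraph `(N, S)`. -/
noncomputable def numComponents (S : Set E) : ℕ := Nat.card ↥(G.components S)

/-- The components of the non-spanning subgraph `(N(S), S)`. -/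
def componentsOn (S : Set E) : Set (Set N) :=
  {W | ∃ v ∈ G.nodeSet S, W = {u | G.nodeConn S u v}}

/-- The edges of `S` whose endpoints all lie in a node set `W`. -/
def edgesIn (S : Set E) (W : Set N) : Set E := {e | e ∈ S ∧ ∀ v ∈ G.ends e, v ∈ W}

/-- An edge set is connected if any two of its edges are joined through
consecutively intersecting edges of the set. -/
def ConnEdges (S : Set E) : Prop :=
  ∀ e ∈ S, ∀ f ∈ S, Relation.ReflTransGen
    (fun a b => a ∈ S ∧ b ∈ S ∧ ∃ v : N, v ∈ G.ends a ∧ v ∈ G.ends b) e f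

/-- A circle: the edge set of a connected subgraph in which every node has degree 2. -/
def IsCircle (C : Finset E) : Prop :=
  C.Nonempty ∧ (∀ e ∈ C, G.IsLink e) ∧ G.ConnEdges ↑C ∧
    ∀ v ∈ G.nodesOf C, G.degreeIn C v = 2

/-- A (simple, open) path joining two distinct nodes `u` and `v`. -/
def IsPath (Q : Finset E) (u v : N) : Prop :=
  Q.Nonempty ∧ u ≠ v ∧ (∀ e ∈ Q, G.IsLink e) ∧ G.ConnEdges ↑Q ∧
    u ∈ G.nodesOf Q ∧ v ∈ G.nodesOf Q ∧
    G.degreeIn Q u = 1 ∧ G.degreeIn Q v = 1 ∧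
    ∀ w ∈ G.nodesOf Q, w ≠ u → w ≠ v → G.degreeIn Q w = 2

/-- A simple graph: all edges are links and no two edges have the same endpoints. -/
def IsSimple : Prop := (∀ e : E, G.IsLink e) ∧ Function.Injective G.ends

/-- The graph is connected. -/
def IsConnected : Prop := ∀ u v : N, G.nodeConn Set.univ u v

/-- Inseparable graph: connected, and for every partition of the edge set into two
nonempty parts the two parts share at least two nodes. -/
def IsInseparable : Prop :=
  G.IsConnected ∧ ∀ A B : Set E, A.Nonempty → B.Nonempty → Disjoint A B →
    A ∪ B = Set.univ → ∃ u v : N, u ≠ v ∧ u ∈ G.nodeSet A ∧ u ∈ G.nodeSet B ∧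
      v ∈ G.nodeSet A ∧ v ∈ G.nodeSet B

/-- A linear class of circles: every member is a circle and no theta subgraph (the
union of three pairwise internally disjoint paths with the same two endpoints)
contains exactly two members of the class. -/
def IsLinearClass (B : Set (Finset E)) : Prop :=
  (∀ C ∈ B, G.IsCircle C) ∧
  ∀ u v : N, ∀ P₁ P₂ P₃ : Finset E,
    G.IsPath P₁ u v → G.IsPath P₂ u v → G.IsPath P₃ u v →
    Disjoint P₁ P₂ → Disjoint P₁ P₃ → Disjoint P₂ P₃ →
    (↑(G.nodesOf P₁) ∩ ↑(G.nodesOf P₂) : Set N) = {u, v} →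
    (↑(G.nodesOf P₁) ∩ ↑(G.nodesOf P₃) : Set N) = {u, v} →
    (↑(G.nodesOf P₂) ∩ ↑(G.nodesOf P₃) : Set N) = {u, v} →
    P₁ ∪ P₂ ∈ B → P₁ ∪ P₃ ∈ B → P₂ ∪ P₃ ∈ B

/-- A balanced edge set with respect to a class `B` of balanced circles:
no half edges, and every circle inside it belongs to `B`. -/
def IsBalancedSet (B : Set (Finset E)) (S : Set E) : Prop :=
  (∀ e ∈ S, G.IsLink e) ∧ ∀ C : Finset E, ↑C ⊆ S → G.IsCircle C → C ∈ B

/-- The number of balanced components of the spanning subgraph `(N, S)`. -/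
noncomputable def numBalComponents (B : Set (Finset E)) (S : Set E) : ℕ :=
  Nat.card ↥{W : Set N | W ∈ G.components S ∧ G.IsBalancedSet B (G.edgesIn S W)}

/-- Frame matroid rank function: `rk S = #N - b(S)`. -/
noncomputable def frameRk [Fintype N] (B : Set (Finset E)) (S : Set E) : ℕ :=
  Fintype.card N - G.numBalComponents B S

/-- Graphic (cycle) matroid rank function: `rk S = #N - c(S)`. -/
noncomputable def graphicRk [Fintype N] (S : Set E) : ℕ :=
  Fintype.card N - G.numComponents S

/-- Graphic matroid rank of a finite edge set, computed inside its own node set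
(valid also for infinite graphs): `rk S = #N(S) - c(N(S), S)`. -/
noncomputable def graphicRkOn (S : Finset E) : ℕ :=
  (G.nodesOf S).card - Nat.card ↥(G.componentsOn ↑S)

/-- Extended lift matroid rank function on `E ⊕ Unit`, where `Sum.inr ()` is the
extra point `e₀`: `rk S = #N - c(S ∩ E)` if `S ⊆ E` is balanced, and
`#N - c(S ∩ E) + 1` if `S` is unbalanced or contains `e₀`. -/
noncomputable def liftRk [Fintype N] (B : Set (Finset E)) (S : Set (E ⊕ Unit)) : ℕ :=
  if G.IsBalancedSet B {e | Sum.inl e ∈ S} ∧ Sum.inr () ∉ S then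
    Fintype.card N - G.numComponents {e | Sum.inl e ∈ S}
  else Fintype.card N - G.numComponents {e | Sum.inl e ∈ S} + 1

/-- Closed sets of the frame matroid (via the rank function; the matroid is finitary). -/
def FrameClosed [Fintype N] (B : Set (Finset E)) (S : Set E) : Prop :=
  ∀ e : E, (∃ S₀ : Finset E, ↑S₀ ⊆ S ∧
    G.frameRk B ↑(insert e S₀) = G.frameRk B ↑S₀) → e ∈ S

/-- Closed sets of the extended lift matroid. -/
def LiftClosed [Fintype N] (B : Set (Finset E)) (S : Set (E ⊕ Unit)) : Prop :=
  ∀ x : E ⊕ Unit, (∃ S₀ : Finset (E ⊕ Unit), ↑S₀ ⊆ S ∧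
    G.liftRk B ↑(insert x S₀) = G.liftRk B ↑S₀) → x ∈ S

/-- The balance-closure of an edge set. -/
def bcl (B : Set (Finset E)) (S : Set E) : Set E :=
  S ∪ {e | ∃ C ∈ B, e ∈ C ∧ ↑C ⊆ S ∪ {e}}

/-- The subgraph of all links, as a graph on the same nodes. -/
def linkGraph : MGraph N {e : E // G.IsLink e} := ⟨fun e => G.ends e.val⟩

/-- Restriction of a class of circles to the subgraph of links. -/
def linkBal (B : Set (Finset E)) : Set (Finset {e : E // G.IsLink e}) :=
  {C | C.image Subtype.val ∈ B}

/-- The subgraph on a subset of the edges (spanning all nodes). -/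
def sub (D : Set E) : MGraph N ↥D := ⟨fun f => G.ends f.val⟩

end MGraph

/-- A graph together with a distinguished class of "balanced" circles.
(It is a biased graph when the class is a linear class.) -/
structure BiasedGraph (N E : Type*) extends MGraph N E where
  Bal : Set (Finset E)

/-- The complete graph on a node set `N`. -/
def completeMGraph (N : Type*) : MGraph N {q : Finset N // q.card = 2} := ⟨Subtype.val⟩

/-- A gain graph with gain group `Γ`: each edge is given by a source, a target
(equal for a half edge) and a gain in the direction from source to target. -/
structure GainGraph (N E : Type*) (Γ : Type*) [Group Γ] extends MGraph N E where
  src : E → N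
  tgt : E → N
  gain : E → Γ
  ends_eq : ∀ e : E, ends e = {src e, tgt e}

namespace GainGraph

variable {N E Γ : Type*} [Group Γ] (Φ : GainGraph N E Γ)

/-- The gain of an edge in the direction from `u` to `v`. -/
noncomputable def ogain (e : E) (u v : N) : Γ :=
  if Φ.src e = u ∧ Φ.tgt e = v then Φ.gain e else (Φ.gain e)⁻¹

/-- A balanced circle of a gain graph: a circle whose gain function is given by a
potential on the nodes (equivalently, the product of its gains along a cyclic
orientation is the identity). -/
def BalancedCircle (C : Finset E) : Prop :=
  Φ.toMGraph.IsCircle C ∧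
    ∃ θ : N → Γ, ∀ e ∈ C, Φ.gain e = (θ (Φ.src e))⁻¹ * θ (Φ.tgt e)

/-- The biased graph `⟨Φ⟩` of a gain graph. -/
def biasedGraph : BiasedGraph N E := { Φ.toMGraph with Bal := {C | Φ.BalancedCircle C} }

end GainGraph

/-- A biased expansion of a graph `Δ` along a projection `p`: `p` is surjective,
preserves endpoints, and every circle of `Δ` with a chosen lift of all but one of
its edges has a unique completion to a balanced circle. -/
def IsBiasedExpansion {N E E' : Type*} (G : MGraph N E) (B : Set (Finset E))
    (Δ : MGraph N E') (p : E → E') : Prop :=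
  Function.Surjective p ∧ (∀ e : E, G.ends e = Δ.ends (p e)) ∧
  ∀ C : Finset E', Δ.IsCircle C → ∀ e₀ ∈ C, ∀ s : E' → E,
    (∀ f ∈ C.erase e₀, p (s f) = f) →
    ∃! t : E, p t = e₀ ∧ (C.erase e₀).image s ∪ {t} ∈ B

/-! ## Axiomatic (synthetic) projective geometry -/

/-- An axiomatic projective geometry: a point set with a line through any two
points, unique when the points are distinct, every line having at least three
points, and satisfying the Veblen–Young axiom. -/
structure ProjGeom (P : Type*) where
  line : P → P → Set P
  line_self : ∀ p : P, line p p = {p}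
  line_symm : ∀ p q : P, line p q = line q p
  left_mem_line : ∀ p q : P, p ∈ line p q
  right_mem_line : ∀ p q : P, q ∈ line p q
  line_unique : ∀ p q x y : P, p ≠ q → x ∈ line p q → y ∈ line p q → x ≠ y →
    line x y = line p q
  exists_third : ∀ p q : P, p ≠ q → ∃ r ∈ line p q, r ≠ p ∧ r ≠ q
  veblen : ∀ p q r s x : P, p ≠ q → r ≠ s → p ≠ r → q ≠ s →
    x ∈ line p q → x ∈ line r s → ∃ y, y ∈ line p r ∧ y ∈ line q s

namespace ProjGeom

variable {P : Type*} (G : ProjGeom P)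

/-- A flat (subspace): a line-closed set of points. -/
def IsFlat (t : Set P) : Prop := ∀ p ∈ t, ∀ q ∈ t, G.line p q ⊆ t

/-- The span of a point set: the smallest flat containing it. -/
def span (A : Set P) : Set P := ⋂₀ {t : Set P | G.IsFlat t ∧ A ⊆ t}

/-- An independent point set: no point is in the span of the others. -/
def Indep (A : Set P) : Prop := ∀ a ∈ A, a ∉ G.span (A \ {a})

/-- The (matroid) rank of a point set: the largest cardinality of a finite
independent subset. -/
noncomputable def rank (A : Set P) : ℕ :=
  sSup {n : ℕ | ∃ B : Finset P, ↑B ⊆ A ∧ G.Indep ↑B ∧ B.card = n}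

/-- A hyperplane: a maximal proper flat. -/
def IsHyperplane (h : Set P) : Prop :=
  G.IsFlat h ∧ h ≠ Set.univ ∧ ∀ t : Set P, G.IsFlat t → h ⊆ t → t = h ∨ t = Set.univ

/-- The codimension of a flat: the least number of hyperplanes intersecting in it. -/
noncomputable def codim (t : Set P) : ℕ :=
  sInf {n : ℕ | ∃ H : Finset (Set P), H.card = n ∧ (∀ h ∈ H, G.IsHyperplane h) ∧
    ⋂₀ ↑H = t}

variable {N : Type*}

/-- A cross-flat with respect to an independent family `ν`: a flat containing
none of the points `ν v`. -/
def crossFlat (ν : N → P) (t : Set P) : Prop := G.IsFlat t ∧ ∀ v : N, ν v ∉ t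

/-- The union of all edge lines of the independent family `ν`. -/
def edgeLineUnion (ν : N → P) : Set P :=
  ⋃ (v : N) (w : N) (_ : v ≠ w), G.line (ν v) (ν w)

/-! ### The Menelaean (point) construction for the frame matroid -/

/-- The underlying graph of the Menelaean construction `Ω(N̂, Ehat)`: a point of `Ehat`
in `N̂` is a half edge, any other point is a link joining the ends of its edge line. -/
noncomputable def menGraph (ν : N → P) (Ehat : Set P)
    (hE : ∀ x ∈ Ehat, x ∉ Set.range ν →
      ∃ pr : N × N, pr.1 ≠ pr.2 ∧ x ∈ G.line (ν pr.1) (ν pr.2)) :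
    MGraph N ↥Ehat where
  ends e :=
    if h : (e : P) ∈ Set.range ν then {(show ∃ v : N, ν v = ↑e from h).choose}
    else {(hE e e.2 h).choose.1, (hE e e.2 h).choose.2}

/-- The balanced circles of the Menelaean construction: circles whose point set
lies in a cross-flat. -/
noncomputable def menBal (ν : N → P) (Ehat : Set P)
    (hE : ∀ x ∈ Ehat, x ∉ Set.range ν →
      ∃ pr : N × N, pr.1 ≠ pr.2 ∧ x ∈ G.line (ν pr.1) (ν pr.2)) :
    Set (Finset ↥Ehat) :=
  {C | (G.menGraph ν Ehat hE).IsCircle C ∧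
    ∃ t : Set P, G.crossFlat ν t ∧ ∀ e ∈ C, (e : P) ∈ t}

/-! ### The Cevian (hyperplane) construction for the frame matroid -/

/-- A Cevian arrangement over the point basis `ν`, described by its associated
graph `Γ` and its apex function: a link `e` with endpoints `v, w` has its apex on
the edge line `v̂ŵ`, off the basis; a half edge at `v` has apex `ν v`. -/
def IsCevian {E : Type*} (ν : N → P) (Γ : MGraph N E) (apex : E → P) : Prop :=
  ∀ e : E,
    (∃ v w : N, v ≠ w ∧ Γ.ends e = ({v, w} : Finset N) ∧
      apex e ∈ G.line (ν v) (ν w) ∧ apex e ∉ Set.range ν) ∨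
    (∃ v : N, Γ.ends e = ({v} : Finset N) ∧ apex e = ν v)

/-- The apical hyperplane of an edge of a Cevian arrangement. -/
def cevHyp {E : Type*} (ν : N → P) (Γ : MGraph N E) (apex : E → P) (e : E) : Set P :=
  if Γ.IsLink e then G.span ((ν '' {u : N | u ∉ Γ.ends e}) ∪ {apex e})
  else G.span (ν '' {u : N | u ∉ Γ.ends e})

/-- The rank function of a Cevian arrangement:
the codimension of the intersection of the corresponding apical hyperplanes. -/
noncomputable def cevRk {E : Type*} (ν : N → P) (Γ : MGraph N E) (apex : E → P)
    (S : Finset E) : ℕ :=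
  G.codim (⋂ e ∈ S, G.cevHyp ν Γ apex e)

/-- The balanced circles of a Cevian arrangement:
circles of deficient hyperplane-intersection rank. -/
noncomputable def cevBal {E : Type*} (ν : N → P) (Γ : MGraph N E) (apex : E → P) :
    Set (Finset E) :=
  {C | Γ.IsCircle C ∧ G.cevRk ν Γ apex C < C.card}

/-! ### The orthographic (point) construction for the lift matroid -/

/-- The projection of the orthographic construction: each point of `Ehat` lies on the
edge line `z'(f)e₀` of a unique edge `f` of `Δ`. -/
noncomputable def orthoProj {E' : Type*} (z' : E' → P) (e₀ : P) (Ehat : Set P)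
    (hE : ∀ x ∈ Ehat, ∃ f : E', x ∈ G.line (z' f) e₀) : ↥Ehat → E' :=
  fun e => (hE e e.2).choose

/-- The underlying graph of the orthographic construction `Ω₀(Ehat)`. -/
noncomputable def orthoGraph {E' : Type*} (Δ : MGraph N E') (z' : E' → P) (e₀ : P)
    (Ehat : Set P) (hE : ∀ x ∈ Ehat, ∃ f : E', x ∈ G.line (z' f) e₀) : MGraph N ↥Ehat :=
  ⟨fun e => Δ.ends (G.orthoProj z' e₀ Ehat hE e)⟩

/-- The balanced circles of the orthographic construction:
circles spanning a cross-flat (a flat not containing `e₀`). -/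
noncomputable def orthoBal {E' : Type*} (Δ : MGraph N E') (z' : E' → P) (e₀ : P)
    (Ehat : Set P) (hE : ∀ x ∈ Ehat, ∃ f : E', x ∈ G.line (z' f) e₀) : Set (Finset ↥Ehat) :=
  {C | (G.orthoGraph Δ z' e₀ Ehat hE).IsCircle C ∧
    e₀ ∉ G.span (Subtype.val '' (↑C : Set ↥Ehat))}

end ProjGeom

/-! ### Synthetic affinographic arrangements -/

/-- A synthetic affinographic arrangement of hyperplanes in the affine geometry
obtained from the projective geometry `G` by deleting the ideal hyperplane `hinf`:
a family of hyperplanes `hP e` (given by their projective completions, with affine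
parts `hP e \ hinf`), with parallel classes indexed by the edges of a graph `Δ` with
links only via the surjection `π`; hyperplanes in the class of `f` have common
ideal part `ideal f`, and the matroid of the ideal parts (rank = codimension inside
`hinf`) is the graphic matroid of `Δ`. -/
def IsAffinographic {P N E E' : Type*} [Fintype N] (G : ProjGeom P) (hinf : Set P)
    (hP : E → Set P) (Δ : MGraph N E') (π : E → E') (ideal : E' → Set P) : Prop :=
  G.IsHyperplane hinf ∧ (∀ f : E', Δ.IsLink f) ∧ Function.Surjective π ∧
  Function.Injective hP ∧ Function.Injective ideal ∧
  (∀ e : E, G.IsHyperplane (hP e) ∧ hP e ≠ hinf ∧ hP e ∩ hinf = ideal (π e)) ∧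
  ∀ S : Finset E', Δ.graphicRk (↑S : Set E') = G.codim (hinf ∩ ⋂ f ∈ S, ideal f) - 1

/-- The underlying graph of the biased graph `Ω(A)` of an affinographic
arrangement: each edge of `Δ` is replaced by the edges of its parallel class. -/
def affinoGraph {N E E' : Type*} (Δ : MGraph N E') (π : E → E') : MGraph N E :=
  ⟨fun e => Δ.ends (π e)⟩

/-- The affine intersection `t_A(S)` of the hyperplanes of `S`. -/
def affInter {P E : Type*} (hinf : Set P) (hP : E → Set P) (S : Set E) : Set P :=
  ⋂ e ∈ S, (hP e \ hinf)

/-- The balanced circles of `Ω(A)`: digons over a single edge of `Δ` are unbalanced;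
any other circle is balanced iff its affine intersection is nonempty. -/
def affinoBal {P N E E' : Type*} (_G : ProjGeom P) (hinf : Set P) (hP : E → Set P)
    (Δ : MGraph N E') (π : E → E') : Set (Finset E) :=
  {C | (affinoGraph Δ π).IsCircle C ∧ ¬(∃ f : E', ∀ e ∈ C, π e = f) ∧
    (affInter hinf hP ↑C).Nonempty}

/-! ### Coordinatized projective spaces -/

/-- The rank of a finite set of points of a coordinatized projective space:
the dimension of the linear span of representative vectors. -/
noncomputable def projRank (F : Type*) {V : Type*} [DivisionRing F] [AddCommGroup V]
    [Module F V] (A : Finset (Projectivization F V)) : ℕ :=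
  Module.finrank F ↥(Submodule.span F (Projectivization.rep '' (↑A : Set (Projectivization F V))))

/-- The edge set of the full biased graph `Ω^•`: the edges of `Ω` together with a
new half edge at every node not already supporting one. -/
def FullE {N E : Type*} (Ω : BiasedGraph N E) : Type _ :=
  E ⊕ {v : N // ∀ e : E, Ω.ends e ≠ ({v} : Finset N)}

/-- The underlying graph of the full biased graph `Ω^•`. -/
def fullGraph {N E : Type*} (Ω : BiasedGraph N E) : MGraph N (FullE Ω) :=
  ⟨Sum.elim Ω.ends (fun v => {v.val})⟩

/-- The balanced circles of the full biased graph `Ω^•` (circles avoid half edges). -/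
def fullBal {N E : Type*} (Ω : BiasedGraph N E) : Set (Finset (FullE Ω)) :=
  {C | ∃ C₀ ∈ Ω.Bal, C = C₀.image Sum.inl}

namespace ProjGeom

variable {P : Type*} (G : ProjGeom P)

theorem isFlat_span (A : Set P) : G.IsFlat (G.span A) :=
  fun p hp q hq _ hx t ht => ht.1 p (hp t ht) q (hq t ht) hx

theorem subset_span (A : Set P) : A ⊆ G.span A := fun _ ha _ ht => ht.2 ha

theorem span_subset_of_isFlat {A t : Set P} (ht : G.IsFlat t) (hA : A ⊆ t) :
    G.span A ⊆ t :=
  fun _ hx => hx t ⟨ht, hA⟩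

theorem span_subset_span {A B : Set P} (h : A ⊆ G.span B) : G.span A ⊆ G.span B :=
  G.span_subset_of_isFlat (G.isFlat_span B) h

theorem span_mono {A B : Set P} (h : A ⊆ B) : G.span A ⊆ G.span B :=
  G.span_subset_span (h.trans (G.subset_span B))

theorem mem_span_pair_of_mem_line {p a b : P} (h : p ∈ G.line a b) : p ∈ G.span {a, b} :=
  G.isFlat_span _ a (G.subset_span _ (by simp)) b (G.subset_span _ (by simp)) h

theorem line_eq_of_mem {p q x y : P} (hx : x ∈ G.line p q) (hy : y ∈ G.line p q)
    (hxy : x ≠ y) : G.line x y = G.line p q := by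
  rcases eq_or_ne p q with rfl | hpq
  · rw [G.line_self] at hx hy
    exact absurd (hx.trans hy.symm) hxy
  · exact G.line_unique p q x y hpq hx hy hxy

theorem line_eq_of_mem_left {p q x : P} (hx : x ∈ G.line p q) (hxp : x ≠ p) :
    G.line p x = G.line p q :=
  G.line_eq_of_mem (G.left_mem_line p q) hx hxp.symm

def join (F : Set P) (q : P) : Set P := insert q (⋃ a ∈ F, G.line q a)

theorem mem_join {F : Set P} {q x : P} :
    x ∈ G.join F q ↔ x = q ∨ ∃ a ∈ F, x ∈ G.line q a := by
  simp [join]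

theorem subset_join (F : Set P) (q : P) : F ⊆ G.join F q :=
  fun a ha => G.mem_join.2 (Or.inr ⟨a, ha, G.right_mem_line q a⟩)

theorem mem_join_of_mem_line_left {F : Set P} {q w z : P} (hw : w ∈ G.join F q)
    (hz : z ∈ G.line q w) : z ∈ G.join F q := by
  rcases eq_or_ne w q with rfl | hwq
  · rw [G.line_self] at hz
    exact G.mem_join.2 (Or.inl hz)
  obtain rfl | ⟨c, hc, hwc⟩ := G.mem_join.1 hw
  · exact absurd rfl hwq
  rw [G.line_eq_of_mem_left hwc hwq] at hz
  exact G.mem_join.2 (Or.inr ⟨c, hc, hz⟩)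

theorem mem_join_of_mem_line_of_mem {F : Set P} (hF : G.IsFlat F) {q a y w : P}
    (ha : a ∈ F) (hy : y ∈ G.join F q) (hw : w ∈ G.line a y) : w ∈ G.join F q := by
  rcases eq_or_ne w a with rfl | hwa
  · exact G.subset_join F q ha
  rcases eq_or_ne w q with rfl | hwq
  · exact G.mem_join.2 (Or.inl rfl)
  obtain rfl | ⟨b, hb, hyb⟩ := G.mem_join.1 hy
  · rw [G.line_symm] at hw
    exact G.mem_join.2 (Or.inr ⟨a, ha, hw⟩)
  rcases eq_or_ne y a with rfl | hya
  · rw [G.line_self] at hw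
    exact absurd hw hwa
  rcases eq_or_ne q b with rfl | hqb
  · rw [G.line_self] at hyb
    rw [hyb, G.line_symm] at hw
    exact G.mem_join.2 (Or.inr ⟨a, ha, hw⟩)
  rcases eq_or_ne a b with rfl | hab
  · rw [G.line_eq_of_mem (G.right_mem_line q a) hyb hya.symm] at hw
    exact G.mem_join.2 (Or.inr ⟨a, ha, hw⟩)
  have hywa : y ∈ G.line w a := by
    rw [G.line_symm, G.line_eq_of_mem (G.left_mem_line a y) hw (Ne.symm hwa)]
    exact G.right_mem_line a y
  obtain ⟨c, hcwq, hcab⟩ := G.veblen w a q b y hwa hqb hwq hab hywa hyb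
  have hcF : c ∈ F := hF a ha b hb hcab
  rcases eq_or_ne c q with rfl | hcq
  · exact G.subset_join F c (hF a ha y (hF c hcF b hb hyb) hw)
  rw [G.line_symm] at hcwq
  refine G.mem_join.2 (Or.inr ⟨c, hcF, ?_⟩)
  rw [G.line_eq_of_mem_left hcwq hcq]
  exact G.right_mem_line q w

theorem isFlat_join {F : Set P} (hF : G.IsFlat F) (q : P) : G.IsFlat (G.join F q) := by
  intro x hx y hy z hz
  rcases eq_or_ne x y with rfl | hxy
  · rw [G.line_self] at hz
    exact hz ▸ hx
  obtain rfl | ⟨a, ha, hxa⟩ := G.mem_join.1 hx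
  · exact G.mem_join_of_mem_line_left hy hz
  rcases eq_or_ne x q with rfl | hxq
  · exact G.mem_join_of_mem_line_left hy hz
  rcases eq_or_ne z y with rfl | hzy
  · exact hy
  rcases eq_or_ne z q with rfl | hzq
  · exact G.mem_join.2 (Or.inl rfl)
  rcases eq_or_ne q a with rfl | hqa
  · rw [G.line_self] at hxa
    exact absurd hxa hxq
  have hya_line : y ∈ G.line q a → z ∈ G.join F q := fun hyqa => by
    rw [G.line_eq_of_mem hxa hyqa hxy] at hz
    exact G.mem_join.2 (Or.inr ⟨a, ha, hz⟩)
  rcases eq_or_ne a y with rfl | hay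
  · exact hya_line (G.right_mem_line q a)
  have hxzy : x ∈ G.line z y := by
    rw [G.line_eq_of_mem hz (G.right_mem_line x y) hzy]
    exact G.left_mem_line x y
  -- Veblen in the triangle `q a y` puts `z` on a line from `q` to a point `w` of `a y`.
  obtain ⟨w, hwqz, hway⟩ := G.veblen q a z y x hqa hzy hzq.symm hay hxa hxzy
  rcases eq_or_ne w q with rfl | hwq
  · refine hya_line ?_
    rw [G.line_eq_of_mem hway (G.left_mem_line a y) hqa]
    exact G.right_mem_line a y
  refine G.mem_join_of_mem_line_left (G.mem_join_of_mem_line_of_mem hF ha hy hway) ?_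
  rw [G.line_eq_of_mem_left hwqz hwq]
  exact G.right_mem_line q z

theorem span_insert_eq_join (q : P) (A : Set P) :
    G.span (insert q A) = G.join (G.span A) q := by
  refine (G.span_subset_of_isFlat (G.isFlat_join (G.isFlat_span A) q) ?_).antisymm ?_
  · exact Set.insert_subset (G.mem_join.2 (Or.inl rfl))
      ((G.subset_span A).trans (G.subset_join _ q))
  · intro x hx
    obtain rfl | ⟨a, ha, hxa⟩ := G.mem_join.1 hx
    · exact G.subset_span _ (Set.mem_insert x A)
    · exact G.isFlat_span _ q (G.subset_span _ (Set.mem_insert q A)) a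
        (G.span_mono (Set.subset_insert q A) ha) hxa

theorem mem_span_insert_exchange {A : Set P} {p q : P} (hp : p ∈ G.span (insert q A))
    (hpA : p ∉ G.span A) : q ∈ G.span (insert p A) := by
  rw [G.span_insert_eq_join] at hp
  obtain rfl | ⟨a, ha, hpa⟩ := G.mem_join.1 hp
  · exact G.subset_span _ (Set.mem_insert p A)
  have hpa' : p ≠ a := fun h => hpA (h ▸ ha)
  have hq : q ∈ G.line p a := by
    rw [G.line_eq_of_mem hpa (G.right_mem_line q a) hpa']
    exact G.left_mem_line q a
  exact G.isFlat_span _ p (G.subset_span _ (Set.mem_insert p A)) a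
    (G.span_mono (Set.subset_insert p A) ha) hq

theorem Indep.subset {G : ProjGeom P} {A B : Set P} (hA : G.Indep A) (h : B ⊆ A) :
    G.Indep B :=
  fun b hb hsp => hA b (h hb) (G.span_mono (Set.sdiff_subset_sdiff_left h) hsp)

theorem indep_empty : G.Indep ∅ := fun _ ha => ha.elim

theorem Indep.insert {G : ProjGeom P} {A : Set P} {p : P} (hA : G.Indep A)
    (hp : p ∉ G.span A) : G.Indep (insert p A) := by
  have hpA : p ∉ A := fun h => hp (G.subset_span A h)
  intro a ha hsp
  rcases eq_or_ne a p with rfl | hap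
  · rw [Set.insert_sdiff_self_of_notMem hpA] at hsp
    exact hp hsp
  have haA : a ∈ A := ha.resolve_left hap
  rw [← Set.insert_sdiff_singleton_comm hap.symm] at hsp
  have h := G.mem_span_insert_exchange hsp (hA a haA)
  rw [Set.insert_sdiff_singleton, Set.insert_eq_of_mem haA] at h
  exact hp h

theorem card_le_card_of_indep_of_subset_span {A B : Finset P} (hB : G.Indep ↑B)
    (hBA : ↑B ⊆ G.span ↑A) : B.card ≤ A.card := by
  induction hn : (B \ A).card using Nat.strong_induction_on generalizing B with
  | _ n ih =>
  by_cases hsub : B ⊆ A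
  · exact Finset.card_le_card hsub
  obtain ⟨b, hbB, hbA⟩ := Finset.not_subset.mp hsub
  have hb : b ∉ G.span ↑(B.erase b) := by
    rw [Finset.coe_erase]
    exact hB b hbB
  obtain ⟨a, haA, ha⟩ : ∃ a ∈ A, a ∉ G.span ↑(B.erase b) := by
    by_contra! h
    exact hb (G.span_subset_span h (hBA hbB))
  have haB : a ∉ B.erase b := fun h => ha (G.subset_span _ h)
  have hlt : (insert a (B.erase b) \ A).card < n := by
    rw [Finset.insert_sdiff_of_mem _ haA, ← hn, Finset.erase_sdiff_comm]
    exact Finset.card_erase_lt_of_mem (Finset.mem_sdiff.2 ⟨hbB, hbA⟩)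
  have hcard := ih _ hlt (B := insert a (B.erase b))
    (by rw [Finset.coe_insert]; exact hB.subset (by simp) |>.insert ha)
    (by
      rw [Finset.coe_insert, Finset.coe_erase]
      exact Set.insert_subset (G.subset_span _ haA) (Set.sdiff_subset.trans hBA)) rfl
  rwa [Finset.card_insert_of_notMem haB, Finset.card_erase_add_one hbB] at hcard

theorem card_le_rank {A B : Finset P} (h : B ⊆ A) (hB : G.Indep ↑B) : B.card ≤ G.rank ↑A :=
  le_csSup ⟨A.card, by rintro n ⟨C, hC, -, rfl⟩; exact Finset.card_le_card hC⟩
    ⟨B, Finset.coe_subset.2 h, hB, rfl⟩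

theorem rank_eq_card_of_subset_span {A B : Finset P} (h : B ⊆ A) (hB : G.Indep ↑B)
    (hA : ↑A ⊆ G.span ↑B) : G.rank ↑A = B.card := by
  refine le_antisymm (csSup_le ⟨0, ∅, by simpa using G.indep_empty⟩ ?_) (G.card_le_rank h hB)
  rintro n ⟨C, hC, hCi, rfl⟩
  exact G.card_le_card_of_indep_of_subset_span hCi (hC.trans hA)

theorem exists_indep_extension {I A : Finset P} (hIA : I ⊆ A) (hI : G.Indep ↑I) :
    ∃ J, I ⊆ J ∧ J ⊆ A ∧ G.Indep ↑J ∧ ↑A ⊆ G.span ↑J := by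
  obtain ⟨J, hJ, hmax⟩ := Finset.exists_max_image
    (A.powerset.filter fun J => I ⊆ J ∧ G.Indep ↑J) Finset.card ⟨I, by simp [hIA, hI]⟩
  simp only [Finset.mem_filter, Finset.mem_powerset] at hJ hmax
  refine ⟨J, hJ.2.1, hJ.1, hJ.2.2, fun p hpA => by_contra fun hp => ?_⟩
  have hpJ : p ∉ J := fun h => hp (G.subset_span _ h)
  have := hmax (insert p J) ⟨Finset.insert_subset hpA hJ.1,
    hJ.2.1.trans (Finset.subset_insert p J), by rw [Finset.coe_insert]; exact hJ.2.2.insert hp⟩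
  rw [Finset.card_insert_of_notMem hpJ] at this
  omega

theorem exists_basis (A : Finset P) :
    ∃ B ⊆ A, G.Indep ↑B ∧ ↑A ⊆ G.span ↑B ∧ G.rank ↑A = B.card := by
  obtain ⟨B, -, hBA, hB, hAB⟩ :=
    G.exists_indep_extension (Finset.empty_subset A) (by simpa using G.indep_empty)
  exact ⟨B, hBA, hB, hAB, G.rank_eq_card_of_subset_span hBA hB hAB⟩

theorem rank_le_rank_of_subset_span {A A' : Finset P} (h : ↑A ⊆ G.span ↑A') :
    G.rank ↑A ≤ G.rank ↑A' := by
  obtain ⟨B, hBA, hB, -, hrk⟩ := G.exists_basis A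
  obtain ⟨B', -, -, hA'B', hrk'⟩ := G.exists_basis A'
  rw [hrk, hrk']
  exact G.card_le_card_of_indep_of_subset_span hB
    ((Finset.coe_subset.2 hBA).trans (h.trans (G.span_subset_span hA'B')))

theorem rank_mono {A A' : Finset P} (h : A ⊆ A') : G.rank ↑A ≤ G.rank ↑A' :=
  G.rank_le_rank_of_subset_span ((Finset.coe_subset.2 h).trans (G.subset_span _))

theorem rank_eq_card_of_indep {A : Finset P} (hA : G.Indep ↑A) : G.rank ↑A = A.card :=
  G.rank_eq_card_of_subset_span subset_rfl hA (G.subset_span _)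

theorem rank_congr_span {A B : Finset P} (h : G.span ↑A = G.span ↑B) :
    G.rank ↑A = G.rank ↑B :=
  (G.rank_le_rank_of_subset_span (h ▸ G.subset_span _)).antisymm
    (G.rank_le_rank_of_subset_span (h ▸ G.subset_span _))

theorem rank_insert_of_mem_span {A : Finset P} {p : P}
    (h : p ∈ G.span ↑A) : G.rank ↑(insert p A) = G.rank ↑A :=
  (G.rank_le_rank_of_subset_span (by
    rw [Finset.coe_insert]; exact Set.insert_subset h (G.subset_span _))).antisymm
    (G.rank_mono (Finset.subset_insert p A))

theorem rank_insert_of_notMem_span {A : Finset P} {p : P}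
    (h : p ∉ G.span ↑A) : G.rank ↑(insert p A) = G.rank ↑A + 1 := by
  obtain ⟨B, hBA, hB, hAB, hrk⟩ := G.exists_basis A
  have hpB : p ∉ G.span ↑B := fun hp => h (G.span_mono (Finset.coe_subset.2 hBA) hp)
  have hpB' : p ∉ B := fun hp => hpB (G.subset_span _ hp)
  rw [hrk, G.rank_eq_card_of_subset_span (Finset.insert_subset_insert p hBA)
    (by rw [Finset.coe_insert]; exact hB.insert hpB), Finset.card_insert_of_notMem hpB']
  rw [Finset.coe_insert, Finset.coe_insert]
  exact Set.insert_subset (G.subset_span _ (Set.mem_insert p _))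
    (hAB.trans (G.span_mono (Set.subset_insert p _)))

theorem rank_union_add_rank_inter_le (A B : Finset P) :
    G.rank ↑(A ∪ B) + G.rank ↑(A ∩ B) ≤ G.rank ↑A + G.rank ↑B := by
  obtain ⟨I, hI, hIi, hIsp, hrkI⟩ := G.exists_basis (A ∩ B)
  obtain ⟨J, hIJ, hJ, hJi, hJsp⟩ :=
    G.exists_indep_extension (hI.trans Finset.inter_subset_union) hIi
  have hJ' : ∀ C, G.Indep ↑(J ∩ C) := fun C => hJi.subset (by simp)
  have hA := G.card_le_rank Finset.inter_subset_right (hJ' A)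
  have hB := G.card_le_rank Finset.inter_subset_right (hJ' B)
  have hcard := Finset.card_union_add_card_inter (J ∩ A) (J ∩ B)
  rw [← Finset.inter_union_distrib_left, Finset.inter_eq_left.2 hJ] at hcard
  have hI' : I.card ≤ (J ∩ A ∩ (J ∩ B)).card := Finset.card_le_card <|
    Finset.subset_inter (Finset.subset_inter hIJ (hI.trans Finset.inter_subset_left))
      (Finset.subset_inter hIJ (hI.trans Finset.inter_subset_right))
  rw [G.rank_eq_card_of_subset_span hJ hJi hJsp, hrkI]
  omega

end ProjGeom

theorem Function.FactorsThrough.card_range_le {α β γ : Type*} [Finite α] {f : α → β}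
    {g : α → γ} (h : f.FactorsThrough g) :
    Nat.card (Set.range f) ≤ Nat.card (Set.range g) := by
  have : Finite (Set.range g) := (Set.finite_range g).to_subtype
  refine Nat.card_le_card_of_surjective (fun W => ⟨f W.2.choose, W.2.choose, rfl⟩) ?_
  rintro ⟨_, u, rfl⟩
  exact ⟨⟨g u, u, rfl⟩, Subtype.ext (h (⟨u, rfl⟩ : ∃ a, g a = g u).choose_spec)⟩

theorem Function.FactorsThrough.card_range_lt {α β γ : Type*} [Finite α] {f : α → β}
    {g : α → γ} (h : f.FactorsThrough g) {u v : α} (hg : g u ≠ g v) (hf : f u = f v) :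
    Nat.card (Set.range f) < Nat.card (Set.range g) := by
  have : Finite (Set.range g) := (Set.finite_range g).to_subtype
  set F : Set.range g → Set.range f := fun W => ⟨f W.2.choose, W.2.choose, rfl⟩
  have hF : ∀ u, F ⟨g u, u, rfl⟩ = ⟨f u, u, rfl⟩ :=
    fun u => Subtype.ext (h (⟨u, rfl⟩ : ∃ a, g a = g u).choose_spec)
  have hsurj : F.Surjective := by
    rintro ⟨_, u, rfl⟩
    exact ⟨_, hF u⟩
  refine lt_of_le_of_ne (Nat.card_le_card_of_surjective F hsurj) fun hcard => hg ?_
  have hFuv : F ⟨g u, u, rfl⟩ = F ⟨g v, v, rfl⟩ := by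
    rw [hF, hF]
    exact Subtype.ext hf
  exact congrArg Subtype.val ((hsurj.bijective_of_nat_card_le hcard.ge).1 hFuv)

namespace MGraph

variable {N E : Type*} (Γ : MGraph N E)

theorem nodeConn_symm {S : Set E} {u v : N} (h : Γ.nodeConn S u v) : Γ.nodeConn S v u :=
  have : Std.Symm (Γ.adjIn S) := ⟨fun _ _ ⟨e, he, ha, hb⟩ => ⟨e, he, hb, ha⟩⟩
  Relation.ReflTransGen.stdSymm.symm _ _ h

theorem nodeConn_mono {S T : Set E} (h : S ⊆ T) {u v : N} (huv : Γ.nodeConn S u v) :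
    Γ.nodeConn T u v :=
  Relation.ReflTransGen.mono (fun _ _ ⟨e, he, ha, hb⟩ => ⟨e, h he, ha, hb⟩) _ _ huv

theorem numComponents_eq_card_range (S : Set E) :
    Γ.numComponents S = Nat.card (Set.range fun v => {u | Γ.nodeConn S u v}) := by
  unfold numComponents components
  congr! 2
  exact Set.ext fun W => ⟨fun ⟨v, h⟩ => ⟨v, h.symm⟩, fun ⟨v, h⟩ => ⟨v, h.symm⟩⟩

theorem numComponents_congr {E' : Type*} {Δ : MGraph N E'} {S : Set E} {T : Set E'}
    (h : Γ.adjIn S = Δ.adjIn T) : Γ.numComponents S = Δ.numComponents T := by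
  unfold numComponents components nodeConn
  rw [h]

theorem setOf_nodeConn_eq_iff {S : Set E} {v w : N} :
    {u | Γ.nodeConn S u v} = {u | Γ.nodeConn S u w} ↔ Γ.nodeConn S v w := by
  refine ⟨fun h => ?_, fun h => Set.ext fun u => ?_⟩
  · have hv : v ∈ {u | Γ.nodeConn S u v} := Relation.ReflTransGen.refl
    rwa [h] at hv
  exact ⟨fun hu => hu.trans h, fun hu => hu.trans (Γ.nodeConn_symm h)⟩

theorem mem_nodesOf {D : Finset E} {v : N} : v ∈ Γ.nodesOf D ↔ ∃ e ∈ D, v ∈ Γ.ends e :=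
  Finset.mem_biUnion

theorem nodesOf_union (A B : Finset E) : Γ.nodesOf (A ∪ B) = Γ.nodesOf A ∪ Γ.nodesOf B :=
  Finset.union_biUnion

theorem nodeConn_of_connEdges {D : Set E} (hD : Γ.ConnEdges D) {a b : E} (ha : a ∈ D)
    (hb : b ∈ D) {v w : N} (hv : v ∈ Γ.ends a) (hw : w ∈ Γ.ends b) : Γ.nodeConn D v w := by
  induction hD a ha b hb generalizing w with
  | refl => exact Relation.ReflTransGen.single ⟨a, ha, hv, hw⟩
  | tail _ hcd ih =>
    obtain ⟨hc, hd, n, hnc, hnd⟩ := hcd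
    exact (ih hc hnc).tail ⟨_, hd, hnd, hw⟩

theorem setOf_nodeConn_of_mem_nodesOf {D : Finset E} (hD : Γ.ConnEdges ↑D) {v : N}
    (hv : v ∈ Γ.nodesOf D) : {u | Γ.nodeConn ↑D u v} = ↑(Γ.nodesOf D) := by
  ext u
  refine ⟨fun hu => ?_, fun hu => ?_⟩
  · rcases Relation.ReflTransGen.cases_head hu with rfl | ⟨c, ⟨e, he, hue, -⟩, -⟩
    · exact hv
    · exact Γ.mem_nodesOf.2 ⟨e, he, hue⟩
  · obtain ⟨a, ha, hua⟩ := Γ.mem_nodesOf.1 hu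
    obtain ⟨b, hb, hvb⟩ := Γ.mem_nodesOf.1 hv
    exact Γ.nodeConn_of_connEdges hD ha hb hua hvb

theorem setOf_nodeConn_of_notMem_nodesOf {D : Finset E} {v : N} (hv : v ∉ Γ.nodesOf D) :
    {u | Γ.nodeConn ↑D u v} = {v} := by
  ext u
  refine ⟨fun hu => ?_, fun hu => hu ▸ Relation.ReflTransGen.refl⟩
  obtain rfl | ⟨c, ⟨e, he, hve, -⟩, -⟩ := Relation.ReflTransGen.cases_head (Γ.nodeConn_symm hu)
  · rfl
  · exact absurd (Γ.mem_nodesOf.2 ⟨e, he, hve⟩) hv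

theorem nodeConn_inter_of_closed {S A : Set E}
    (hA : ∀ a ∈ A, ∀ f ∈ S, ∀ n ∈ Γ.ends a, n ∈ Γ.ends f → f ∈ A) {a : E}
    (ha : a ∈ A) {v w : N} (hv : v ∈ Γ.ends a) (h : Γ.nodeConn S v w) : Γ.nodeConn (S ∩ A) v w := by
  induction h using Relation.ReflTransGen.head_induction_on generalizing a with
  | refl => exact Relation.ReflTransGen.refl
  | head hvc _ ih =>
    obtain ⟨f, hf, hvf, hcf⟩ := hvc
    have hfA := hA a ha f hf _ hv hvf
    exact Relation.ReflTransGen.head ⟨f, ⟨hf, hfA⟩, hvf, hcf⟩ (ih hfA hcf)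

theorem connEdges_union {S T : Set E} (hS : Γ.ConnEdges S) (hT : Γ.ConnEdges T) {a b : E}
    (ha : a ∈ S) (hb : b ∈ T) {n : N} (hna : n ∈ Γ.ends a) (hnb : n ∈ Γ.ends b) :
    Γ.ConnEdges (S ∪ T) := by
  have lift : ∀ {U : Set E}, U ⊆ S ∪ T → Γ.ConnEdges U → ∀ e ∈ U, ∀ f ∈ U,
      Relation.ReflTransGen (fun x y => x ∈ S ∪ T ∧ y ∈ S ∪ T ∧
        ∃ m : N, m ∈ Γ.ends x ∧ m ∈ Γ.ends y) e f := fun hU hconn e he f hf =>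
    Relation.ReflTransGen.mono (fun _ _ ⟨hx, hy, hm⟩ => ⟨hU hx, hU hy, hm⟩) _ _
      (hconn e he f hf)
  have liftS := lift Set.subset_union_left hS
  have liftT := lift Set.subset_union_right hT
  intro e he f hf
  rcases he with he | he <;> rcases hf with hf | hf
  · exact liftS e he f hf
  · exact ((liftS e he a ha).tail ⟨Or.inl ha, Or.inr hb, n, hna, hnb⟩).trans (liftT b hb f hf)
  · exact ((liftT e he b hb).tail ⟨Or.inr hb, Or.inl ha, n, hnb, hna⟩).trans (liftS a ha f hf)
  · exact liftT e he f hf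

theorem sum_degreeIn_of_isLink {D : Finset E} (hD : ∀ e ∈ D, Γ.IsLink e) :
    ∑ v ∈ Γ.nodesOf D, Γ.degreeIn D v = 2 * D.card := by
  unfold degreeIn
  simp_rw [Finset.card_filter]
  rw [Finset.sum_comm, Finset.card_eq_sum_ones, Finset.mul_sum]
  refine Finset.sum_congr rfl fun e he => ?_
  rw [← Finset.card_filter, Finset.filter_mem_eq_inter,
    Finset.inter_eq_right.2 fun v hv => Γ.mem_nodesOf.2 ⟨e, he, hv⟩, hD e he, mul_one]

theorem degreeIn_union {A B : Finset E} (h : Disjoint A B) (v : N) :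
    Γ.degreeIn (A ∪ B) v = Γ.degreeIn A v + Γ.degreeIn B v := by
  unfold degreeIn
  rw [Finset.filter_union]
  exact Finset.card_union_of_disjoint (Finset.disjoint_filter_filter h)

theorem degreeIn_eq_zero {D : Finset E} {v : N} (hv : v ∉ Γ.nodesOf D) : Γ.degreeIn D v = 0 :=
  Finset.card_eq_zero.2 <| Finset.filter_eq_empty_iff.2 fun e he hve =>
    hv (Γ.mem_nodesOf.2 ⟨e, he, hve⟩)

theorem two_le_degreeIn {X : Finset E} {a : E} (ha : a ∈ X) (hlink : Γ.IsLink a) {v : N}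
    (hva : v ∈ Γ.ends a) (hcyc : ∀ w ∈ Γ.ends a, Γ.nodeConn (↑X \ {a}) v w) :
    2 ≤ Γ.degreeIn X v := by
  obtain ⟨w, hw, hwv⟩ := Finset.exists_mem_ne (by rw [hlink]; norm_num) v
  obtain h | ⟨c, ⟨b, hb, hvb, -⟩, -⟩ := Relation.ReflTransGen.cases_head (hcyc w hw)
  · exact absurd h.symm hwv
  calc 2 = ({a, b} : Finset E).card := (Finset.card_pair (Ne.symm hb.2)).symm
    _ ≤ Γ.degreeIn X v := Finset.card_le_card <| Finset.insert_subset
        (Finset.mem_filter.2 ⟨ha, hva⟩)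
        (Finset.singleton_subset_iff.2 (Finset.mem_filter.2 ⟨hb.1, hvb⟩))

theorem isCircle_union_of_isPath {A B : Finset E} {u v : N} (hA : Γ.IsPath A u v)
    (hB : Γ.IsPath B u v) (hAB : Disjoint A B)
    (huv : (↑(Γ.nodesOf A) ∩ ↑(Γ.nodesOf B) : Set N) = {u, v}) : Γ.IsCircle (A ∪ B) := by
  obtain ⟨hAne, -, hAlink, hAconn, hAu, -, hAdu, hAdv, hAdeg⟩ := hA
  obtain ⟨-, -, hBlink, hBconn, hBu, -, hBdu, hBdv, hBdeg⟩ := hB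
  obtain ⟨a, ha, hua⟩ := Γ.mem_nodesOf.1 hAu
  obtain ⟨b, hb, hub⟩ := Γ.mem_nodesOf.1 hBu
  refine ⟨hAne.mono Finset.subset_union_left,
    fun e he => (Finset.mem_union.1 he).elim (hAlink e) (hBlink e), ?_, fun w hw => ?_⟩
  · rw [Finset.coe_union]
    exact Γ.connEdges_union hAconn hBconn ha hb hua hub
  rw [Γ.degreeIn_union hAB]
  rcases eq_or_ne w u with rfl | hwu
  · rw [hAdu, hBdu]
  rcases eq_or_ne w v with rfl | hwv
  · rw [hAdv, hBdv]
  have hwAB : w ∉ (↑(Γ.nodesOf A) ∩ ↑(Γ.nodesOf B) : Set N) := by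
    rw [huv]
    simp [hwu, hwv]
  rw [Γ.nodesOf_union, Finset.mem_union] at hw
  rcases hw with hw | hw
  · rw [hAdeg w hw hwu hwv, Γ.degreeIn_eq_zero fun h => hwAB ⟨hw, h⟩]
  · rw [hBdeg w hw hwu hwv, Γ.degreeIn_eq_zero fun h => hwAB ⟨h, hw⟩]

theorem card_nodesOf_union_add_two {A B : Finset E} {u v : N} (huv : u ≠ v)
    (h : (↑(Γ.nodesOf A) ∩ ↑(Γ.nodesOf B) : Set N) = {u, v}) :
    (Γ.nodesOf (A ∪ B)).card + 2 = (Γ.nodesOf A).card + (Γ.nodesOf B).card := by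
  rw [Γ.nodesOf_union, ← Finset.card_union_add_card_inter, ← Finset.card_pair huv]
  congr 2
  apply Finset.coe_injective
  rw [Finset.coe_inter, h, Finset.coe_pair]

theorem IsBalancedSet.mono {Γ : MGraph N E} {B : Set (Finset E)} {S T : Set E}
    (hT : Γ.IsBalancedSet B T) (h : S ⊆ T) : Γ.IsBalancedSet B S :=
  ⟨fun e he => hT.1 e (h he), fun C hC => hT.2 C (hC.trans h)⟩

section Finite

variable [Finite N]

theorem numComponents_le_of_nodeConn_imp {S T : Set E}
    (h : ∀ u v, Γ.nodeConn S u v → Γ.nodeConn T u v) :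
    Γ.numComponents T ≤ Γ.numComponents S := by
  rw [Γ.numComponents_eq_card_range, Γ.numComponents_eq_card_range]
  refine Function.FactorsThrough.card_range_le fun _ _ huv => ?_
  rw [Γ.setOf_nodeConn_eq_iff] at huv ⊢
  exact h _ _ huv

theorem numComponents_anti {S T : Set E} (h : S ⊆ T) :
    Γ.numComponents T ≤ Γ.numComponents S :=
  Γ.numComponents_le_of_nodeConn_imp fun _ _ => Γ.nodeConn_mono h

theorem numComponents_sdiff_of_nodeConn {S : Set E} {e : E}
    (h : ∀ v ∈ Γ.ends e, ∀ w ∈ Γ.ends e, Γ.nodeConn (S \ {e}) v w) :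
    Γ.numComponents (S \ {e}) = Γ.numComponents S := by
  refine le_antisymm (Γ.numComponents_le_of_nodeConn_imp fun u v huv => ?_)
    (Γ.numComponents_anti Set.sdiff_subset)
  induction huv with
  | refl => exact Relation.ReflTransGen.refl
  | tail _ hadj ih =>
    obtain ⟨f, hfS, ha, hb⟩ := hadj
    rcases eq_or_ne f e with rfl | hfe
    · exact ih.trans (h _ ha _ hb)
    · exact ih.tail ⟨f, ⟨hfS, hfe⟩, ha, hb⟩

theorem numComponents_lt_sdiff {S : Set E} {e : E} (he : e ∈ S) {v w : N}
    (hv : v ∈ Γ.ends e) (hw : w ∈ Γ.ends e) (h : ¬ Γ.nodeConn (S \ {e}) v w) :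
    Γ.numComponents S < Γ.numComponents (S \ {e}) := by
  rw [Γ.numComponents_eq_card_range, Γ.numComponents_eq_card_range]
  refine Function.FactorsThrough.card_range_lt (u := v) (v := w) (fun _ _ huv => ?_) ?_ ?_
  · rw [Γ.setOf_nodeConn_eq_iff] at huv ⊢
    exact Γ.nodeConn_mono Set.sdiff_subset huv
  · rwa [Ne, Γ.setOf_nodeConn_eq_iff]
  · rw [Γ.setOf_nodeConn_eq_iff]
    exact Relation.ReflTransGen.single ⟨e, he, hv, hw⟩

theorem nodeConn_sdiff_of_numComponents_eq {S : Set E} {e : E} (he : e ∈ S)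
    (h : Γ.numComponents (S \ {e}) = Γ.numComponents S) :
    ∀ v ∈ Γ.ends e, ∀ w ∈ Γ.ends e, Γ.nodeConn (S \ {e}) v w := fun _ hv _ hw =>
  by_contra fun hvw => (Γ.numComponents_lt_sdiff he hv hw hvw).ne' h

end Finite

variable [Fintype N]

theorem numComponents_le_card (S : Set E) : Γ.numComponents S ≤ Fintype.card N := by
  rw [Γ.numComponents_eq_card_range, ← Nat.card_eq_fintype_card]
  exact Finite.card_range_le _

/-- A connected edge set forms one component with its nodes; every other node is isolated. -/
theorem numComponents_add_card_nodesOf {D : Finset E} (hD : Γ.ConnEdges ↑D)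
    (hne : (Γ.nodesOf D).Nonempty) :
    Γ.numComponents ↑D + (Γ.nodesOf D).card = Fintype.card N + 1 := by
  obtain ⟨v₀, hv₀⟩ := hne
  have hrange : (Set.range fun v => {u | Γ.nodeConn ↑D u v}) =
      insert ↑(Γ.nodesOf D) ((fun w => {w}) '' ↑(Γ.nodesOf D)ᶜ) := by
    ext W
    constructor
    · rintro ⟨v, rfl⟩
      by_cases hv : v ∈ Γ.nodesOf D
      · exact Or.inl (Γ.setOf_nodeConn_of_mem_nodesOf hD hv)
      · exact Or.inr ⟨v, by simpa using hv, (Γ.setOf_nodeConn_of_notMem_nodesOf hv).symm⟩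
    · rintro (rfl | ⟨w, hw, rfl⟩)
      · exact ⟨v₀, Γ.setOf_nodeConn_of_mem_nodesOf hD hv₀⟩
      · exact ⟨w, Γ.setOf_nodeConn_of_notMem_nodesOf (by simpa using hw)⟩
  have hnotMem : ↑(Γ.nodesOf D) ∉ (fun w => ({w} : Set N)) '' ↑(Γ.nodesOf D)ᶜ := by
    rintro ⟨w, hw, hwD⟩
    have : w ∈ (↑(Γ.nodesOf D) : Set N) := hwD ▸ rfl
    exact Finset.mem_compl.1 hw this
  rw [Γ.numComponents_eq_card_range, hrange, Nat.card_coe_set_eq,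
    Set.ncard_insert_of_notMem hnotMem, Set.ncard_image_of_injective _ Set.singleton_injective,
    Set.ncard_coe_finset, Finset.card_compl]
  have := Finset.card_le_univ (Γ.nodesOf D)
  omega

/-- The edges chained to `e` form an adjacency-closed set `A`, so a cycle through `e` stays in
`A`; if `A ≠ X`, deleting `e` from the independent set `A` would not change its components. -/
theorem connEdges_of_minimal {X : Finset E}
    (hcyc : ∀ e ∈ X, ∀ v ∈ Γ.ends e, ∀ w ∈ Γ.ends e, Γ.nodeConn (↑X \ {e}) v w)
    (hmin : ∀ Y ⊂ X, Γ.numComponents ↑Y + Y.card = Fintype.card N) : Γ.ConnEdges ↑X := by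
  intro e he f hf
  by_contra hef
  set A := X.filter fun a => Relation.ReflTransGen (fun a b =>
    a ∈ (↑X : Set E) ∧ b ∈ (↑X : Set E) ∧ ∃ v, v ∈ Γ.ends a ∧ v ∈ Γ.ends b) e a
  have heA : e ∈ A := Finset.mem_filter.2 ⟨he, Relation.ReflTransGen.refl⟩
  have hAX : A ⊂ X := Finset.ssubset_iff_of_subset (Finset.filter_subset _ X) |>.2
    ⟨f, hf, fun hfA => hef (Finset.mem_filter.1 hfA).2⟩
  have hclosed : ∀ a ∈ (↑A : Set E), ∀ g ∈ (↑X : Set E) \ {e}, ∀ n ∈ Γ.ends a,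
      n ∈ Γ.ends g → g ∈ (↑A : Set E) := by
    intro a ha g hg n hna hng
    obtain ⟨haX, hea⟩ := Finset.mem_filter.1 ha
    exact Finset.mem_filter.2 ⟨hg.1, hea.tail ⟨haX, hg.1, n, hna, hng⟩⟩
  have hcyc' : ∀ v ∈ Γ.ends e, ∀ w ∈ Γ.ends e, Γ.nodeConn (↑A \ {e}) v w := by
    intro v hv w hw
    refine Γ.nodeConn_mono ?_ (Γ.nodeConn_inter_of_closed hclosed heA hv (hcyc e he v hv w hw))
    exact fun g hg => ⟨hg.2, hg.1.2⟩
  have hA := hmin A hAX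
  have hAe := hmin (A.erase e) ((Finset.erase_subset e A).trans_ssubset hAX)
  rw [Finset.coe_erase, Γ.numComponents_sdiff_of_nodeConn hcyc'] at hAe
  have := Finset.card_erase_add_one heA
  omega

/-- A circuit of the graphic matroid (nullity one, every proper subset independent)
is a circle. -/
theorem isCircle_of_minimal {X : Finset E} (hlink : ∀ e ∈ X, Γ.IsLink e)
    (hX : Γ.numComponents ↑X + X.card = Fintype.card N + 1)
    (hmin : ∀ Y ⊂ X, Γ.numComponents ↑Y + Y.card = Fintype.card N) : Γ.IsCircle X := by
  have hcyc : ∀ e ∈ X, ∀ v ∈ Γ.ends e, ∀ w ∈ Γ.ends e, Γ.nodeConn (↑X \ {e}) v w := by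
    intro e he
    refine Γ.nodeConn_sdiff_of_numComponents_eq he ?_
    have h := hmin (X.erase e) (Finset.erase_ssubset he)
    rw [Finset.coe_erase] at h
    have := Finset.card_erase_add_one he
    omega
  have hconn := Γ.connEdges_of_minimal hcyc hmin
  obtain ⟨e, he⟩ : X.Nonempty := by
    rw [Finset.nonempty_iff_ne_empty]
    rintro rfl
    have := Γ.numComponents_le_card (↑(∅ : Finset E) : Set E)
    simp only [Finset.card_empty] at hX
    omega
  have hnodes : (Γ.nodesOf X).Nonempty := by
    obtain ⟨v, hv⟩ := Finset.card_pos.1 (by rw [hlink e he]; norm_num : 0 < (Γ.ends e).card)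
    exact ⟨v, Γ.mem_nodesOf.2 ⟨e, he, hv⟩⟩
  have hcard : (Γ.nodesOf X).card = X.card := by
    have := Γ.numComponents_add_card_nodesOf hconn hnodes
    omega
  have hdeg : ∀ v ∈ Γ.nodesOf X, 2 ≤ Γ.degreeIn X v := fun v hv => by
    obtain ⟨a, ha, hva⟩ := Γ.mem_nodesOf.1 hv
    exact Γ.two_le_degreeIn ha (hlink a ha) hva (hcyc a ha v hva)
  refine ⟨⟨e, he⟩, hlink, hconn, fun v hv => ?_⟩
  refine ((Finset.sum_eq_sum_iff_of_le hdeg).1 ?_ v hv).symm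
  rw [Finset.sum_const, smul_eq_mul, Γ.sum_degreeIn_of_isLink hlink, hcard, mul_comm]

end MGraph

namespace ProjGeom

variable {P N E : Type*} (G : ProjGeom P) (Γ : MGraph N E) (x : E → P) (e₀ : P)

def spanBal : Set (Finset E) := {C | Γ.IsCircle C ∧ e₀ ∉ G.span (x '' ↑C)}

/-- The points `x e` together with `e₀` realise the rank function of the extended lift
matroid on all edge sets to which `e₀` is added. -/
def RepresentsLiftWith [Fintype N] : Prop :=
  ∀ X : Finset E, G.rank ↑(insert e₀ (X.image x)) + Γ.numComponents ↑X = Fintype.card N + 1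

variable {G Γ x e₀}

theorem mem_span_of_not_isBalancedSet (hlink : ∀ e, Γ.IsLink e) {X : Finset E}
    (hX : ¬ Γ.IsBalancedSet (G.spanBal Γ x e₀) ↑X) : e₀ ∈ G.span ↑(X.image x) := by
  by_contra h
  refine hX ⟨fun e _ => hlink e, fun C hC hcirc => ⟨hcirc, fun hC' => ?_⟩⟩
  refine h (G.span_mono ?_ hC')
  rw [Finset.coe_image]
  exact Set.image_mono hC

variable [Fintype N]

theorem RepresentsLiftWith.rank_add_numComponents_of_notMem_span
    (hrep : G.RepresentsLiftWith Γ x e₀) {X : Finset E} (h : e₀ ∉ G.span ↑(X.image x)) :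
    G.rank ↑(X.image x) + Γ.numComponents ↑X = Fintype.card N := by
  have := hrep X
  rw [G.rank_insert_of_notMem_span h] at this
  omega

theorem RepresentsLiftWith.rank_add_numComponents_of_mem_span
    (hrep : G.RepresentsLiftWith Γ x e₀) {X : Finset E} (h : e₀ ∈ G.span ↑(X.image x)) :
    G.rank ↑(X.image x) + Γ.numComponents ↑X = Fintype.card N + 1 := by
  rw [← G.rank_insert_of_mem_span h]
  exact hrep X

/-- A minimal balanced set spanning `e₀` would be independent of graphic nullity one,
hence a circle: but circles spanning `e₀` are unbalanced. -/
theorem RepresentsLiftWith.notMem_span_of_isBalancedSet (hrep : G.RepresentsLiftWith Γ x e₀)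
    (hx : x.Injective) (X : Finset E) (hX : Γ.IsBalancedSet (G.spanBal Γ x e₀) ↑X) :
    e₀ ∉ G.span ↑(X.image x) := by
  induction X using Finset.strongInduction with
  | H X ih =>
  intro hsp
  have hproper : ∀ Y ⊂ X, e₀ ∉ G.span ↑(Y.image x) := fun Y hY =>
    ih Y hY (hX.mono (Finset.coe_subset.2 hY.subset))
  have hindep : G.Indep ↑(X.image x) := by
    intro a ha hsp'
    obtain ⟨e, he, rfl⟩ := Finset.mem_image.1 ha
    refine hproper (X.erase e) (Finset.erase_ssubset he) (G.span_subset_span ?_ hsp)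
    rw [Finset.image_erase hx, Finset.coe_erase]
    exact fun b hb => if hbe : b = x e then hbe ▸ hsp' else G.subset_span _ ⟨hb, hbe⟩
  have hcard : ∀ Y ⊆ X, G.rank ↑(Y.image x) = Y.card := fun Y hY => by
    rw [G.rank_eq_card_of_indep
      (hindep.subset (Finset.coe_subset.2 (Finset.image_subset_image hY))),
      Finset.card_image_of_injective _ hx]
  have hcirc : Γ.IsCircle X := by
    refine Γ.isCircle_of_minimal (fun e he => hX.1 e he) ?_ fun Y hY => ?_
    · rw [← hcard X subset_rfl, add_comm]
      exact hrep.rank_add_numComponents_of_mem_span hsp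
    · rw [← hcard Y hY.subset, add_comm]
      exact hrep.rank_add_numComponents_of_notMem_span (hproper Y hY)
  exact (hX.2 X subset_rfl hcirc).2 (by rwa [← Finset.coe_image])

theorem RepresentsLiftWith.liftRk_spanBal (hrep : G.RepresentsLiftWith Γ x e₀)
    (hx : x.Injective) (hlink : ∀ e, Γ.IsLink e) (S : Finset (E ⊕ Unit)) :
    Γ.liftRk (G.spanBal Γ x e₀) ↑S = G.rank (Sum.elim x (fun _ : Unit => e₀) '' ↑S) := by
  set X := S.toLeft
  have hX : {e | Sum.inl e ∈ (↑S : Set (E ⊕ Unit))} = ↑X := by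
    ext
    simp [X]
  have himage : Sum.elim x (fun _ : Unit => e₀) '' ↑S =
      ↑(if Sum.inr () ∈ S then insert e₀ (X.image x) else X.image x) := by
    ext y
    split_ifs with h0 <;> simp [X, Sum.exists, h0, eq_comm, or_comm]
  have hc := Γ.numComponents_le_card (↑X : Set E)
  unfold MGraph.liftRk
  rw [hX, himage]
  by_cases h0 : Sum.inr () ∈ S
  · have := hrep X
    simp only [h0, not_true_eq_false, and_false, if_false, if_true, Finset.mem_coe]
    omega
  simp only [h0, Finset.mem_coe, not_false_eq_true, and_true, if_false]
  by_cases hbal : Γ.IsBalancedSet (G.spanBal Γ x e₀) ↑X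
  · have := hrep.rank_add_numComponents_of_notMem_span
      (hrep.notMem_span_of_isBalancedSet hx X hbal)
    rw [if_pos hbal]
    omega
  · have := hrep.rank_add_numComponents_of_mem_span (mem_span_of_not_isBalancedSet hlink hbal)
    rw [if_neg hbal]
    omega

theorem RepresentsLiftWith.rank_add_one_eq_card_nodesOf (hrep : G.RepresentsLiftWith Γ x e₀)
    {X : Finset E} (hX : Γ.ConnEdges ↑X) (hne : (Γ.nodesOf X).Nonempty)
    (h : e₀ ∉ G.span ↑(X.image x)) : G.rank ↑(X.image x) + 1 = (Γ.nodesOf X).card := by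
  have := Γ.numComponents_add_card_nodesOf hX hne
  have := hrep.rank_add_numComponents_of_notMem_span h
  omega

theorem RepresentsLiftWith.rank_eq_card_nodesOf (hrep : G.RepresentsLiftWith Γ x e₀)
    {X : Finset E} (hX : Γ.ConnEdges ↑X) (hne : (Γ.nodesOf X).Nonempty)
    (h : e₀ ∈ G.span ↑(X.image x)) : G.rank ↑(X.image x) = (Γ.nodesOf X).card := by
  have := Γ.numComponents_add_card_nodesOf hX hne
  have := hrep.rank_add_numComponents_of_mem_span h
  omega

/-- In a theta graph `P₁ ∪ P₂ ∪ P₃` with `P₁ ∪ P₂` and `P₁ ∪ P₃` balanced, a circle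
`P₂ ∪ P₃` spanning `e₀` would break the submodularity of the rank. -/
theorem RepresentsLiftWith.isLinearClass_spanBal (hrep : G.RepresentsLiftWith Γ x e₀) :
    Γ.IsLinearClass (G.spanBal Γ x e₀) := by
  refine ⟨fun C hC => hC.1, ?_⟩
  intro u v P₁ P₂ P₃ h₁ h₂ h₃ _ _ d₂₃ n₁₂ n₁₃ n₂₃ ⟨c₁₂, s₁₂⟩ ⟨c₁₃, s₁₃⟩
  refine ⟨Γ.isCircle_union_of_isPath h₂ h₃ d₂₃ n₂₃, fun hsp => ?_⟩
  rw [← Finset.coe_image] at hsp s₁₂ s₁₃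
  have image_subset : ∀ {A B : Finset E}, A ⊆ B → (↑(A.image x) : Set P) ⊆ ↑(B.image x) :=
    fun h => Finset.coe_subset.2 (Finset.image_subset_image h)
  have huv : u ≠ v := h₁.2.1
  have hu₁ : u ∈ Γ.nodesOf P₁ := h₁.2.2.2.2.1
  have hne : ∀ A, P₁ ⊆ A → (Γ.nodesOf A).Nonempty :=
    fun A hA => ⟨u, Finset.biUnion_subset_biUnion_of_subset_left _ hA hu₁⟩
  have hT : Γ.ConnEdges ↑(P₁ ∪ P₂ ∪ P₃) := by
    obtain ⟨a, ha, hua⟩ := Γ.mem_nodesOf.1 hu₁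
    obtain ⟨b, hb, hub⟩ := Γ.mem_nodesOf.1 h₃.2.2.2.2.1
    rw [Finset.coe_union]
    exact Γ.connEdges_union c₁₂.2.2.1 h₃.2.2.2.1 (Finset.mem_union_left _ ha) hb hua hub
  have r₁₂ := hrep.rank_add_one_eq_card_nodesOf c₁₂.2.2.1
    (hne _ Finset.subset_union_left) s₁₂
  have r₁₃ := hrep.rank_add_one_eq_card_nodesOf c₁₃.2.2.1
    (hne _ Finset.subset_union_left) s₁₃
  have r₁ := hrep.rank_add_one_eq_card_nodesOf h₁.2.2.2.1 (hne _ subset_rfl)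
    fun h => s₁₂ (G.span_mono (image_subset Finset.subset_union_left) h)
  have rT := hrep.rank_eq_card_nodesOf hT
    (hne _ (Finset.subset_union_left.trans Finset.subset_union_left))
    (G.span_mono (image_subset (Finset.union_subset_union Finset.subset_union_right subset_rfl))
      hsp)
  have hsub := G.rank_union_add_rank_inter_le ((P₁ ∪ P₂).image x) ((P₁ ∪ P₃).image x)
  rw [← Finset.image_union, show P₁ ∪ P₂ ∪ (P₁ ∪ P₃) = P₁ ∪ P₂ ∪ P₃ by
    ext; simp only [Finset.mem_union]; tauto] at hsub
  have hinter := G.rank_mono (A := P₁.image x)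
    (A' := (P₁ ∪ P₂).image x ∩ (P₁ ∪ P₃).image x) (Finset.subset_inter
      (Finset.image_subset_image Finset.subset_union_left)
      (Finset.image_subset_image Finset.subset_union_left))
  have k₁₂ := Γ.card_nodesOf_union_add_two huv n₁₂
  have k₁₃ := Γ.card_nodesOf_union_add_two huv n₁₃
  have kT := Γ.card_nodesOf_union_add_two (A := P₁ ∪ P₂) (B := P₃) huv (by
    rw [Γ.nodesOf_union, Finset.coe_union, Set.union_inter_distrib_right, n₁₃, n₂₃,
      Set.union_self])
  omega

end ProjGeom

namespace ProjGeom

variable {P : Type*} (G : ProjGeom P)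

theorem span_insert_eq_span_insert {q : P} {A B : Set P} (hA : A ⊆ G.span (insert q B))
    (hB : B ⊆ G.span (insert q A)) : G.span (insert q A) = G.span (insert q B) :=
  (G.span_subset_span (Set.insert_subset (G.subset_span _ (Set.mem_insert q B)) hA)).antisymm
    (G.span_subset_span (Set.insert_subset (G.subset_span _ (Set.mem_insert q A)) hB))

variable {N E' : Type*} {z' : E' → P} {e₀ : P} {Ehat : Set P}
  (hE : ∀ x ∈ Ehat, ∃ f : E', x ∈ G.line (z' f) e₀)

theorem coe_mem_line_orthoProj (e : Ehat) :
    (e : P) ∈ G.line (z' (G.orthoProj z' e₀ Ehat hE e)) e₀ :=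
  (hE e e.2).choose_spec

theorem orthoProj_mem_line (hne : e₀ ∉ Ehat) (e : Ehat) :
    z' (G.orthoProj z' e₀ Ehat hE e) ∈ G.line (e : P) e₀ := by
  rw [G.line_eq_of_mem (G.coe_mem_line_orthoProj hE e) (G.right_mem_line _ _)
    fun h => hne (h ▸ e.2)]
  exact G.left_mem_line _ _

/-- Along the lines through `e₀`, each edge point may be traded for its foot in `P'`. -/
theorem span_insert_image_val_eq (hne : e₀ ∉ Ehat) (X : Finset Ehat) :
    G.span (insert e₀ (Subtype.val '' (↑X : Set Ehat))) =
      G.span (insert e₀ (z' '' ↑(X.image (G.orthoProj z' e₀ Ehat hE)))) := by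
  refine G.span_insert_eq_span_insert ?_ ?_
  · rintro _ ⟨e, he, rfl⟩
    refine G.span_mono ?_ (G.mem_span_pair_of_mem_line (G.coe_mem_line_orthoProj hE e))
    refine Set.pair_subset (Set.mem_insert_of_mem _ ⟨_, ?_, rfl⟩) (Set.mem_insert _ _)
    exact Finset.mem_coe.2 (Finset.mem_image_of_mem _ he)
  · rintro _ ⟨f, hf, rfl⟩
    obtain ⟨e, he, rfl⟩ := Finset.mem_image.1 hf
    refine G.span_mono ?_ (G.mem_span_pair_of_mem_line (G.orthoProj_mem_line hE hne e))
    exact Set.pair_subset (Set.mem_insert_of_mem _ ⟨e, he, rfl⟩) (Set.mem_insert _ _)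

theorem numComponents_orthoGraph (Δ : MGraph N E') (X : Finset Ehat) :
    (G.orthoGraph Δ z' e₀ Ehat hE).numComponents ↑X =
      Δ.numComponents ↑(X.image (G.orthoProj z' e₀ Ehat hE)) := by
  refine MGraph.numComponents_congr _ ?_
  ext u v
  simp [MGraph.adjIn, orthoGraph]

theorem representsLiftWith_orthoGraph [Fintype N] (Δ : MGraph N E') {P' : Set P}
    (hP' : G.IsFlat P') (hz'mem : ∀ f : E', z' f ∈ P')
    (hz'rep : ∀ S : Finset E', Δ.graphicRk (↑S : Set E') = G.rank (z' '' ↑S))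
    (he₀ : e₀ ∉ P') (hne : e₀ ∉ Ehat) :
    G.RepresentsLiftWith (G.orthoGraph Δ z' e₀ Ehat hE) Subtype.val e₀ := by
  intro X
  rw [G.numComponents_orthoGraph, G.rank_congr_span
    (B := insert e₀ ((X.image (G.orthoProj z' e₀ Ehat hE)).image z')) (by
      simpa only [Finset.coe_insert, Finset.coe_image] using G.span_insert_image_val_eq hE hne X)]
  set F := X.image (G.orthoProj z' e₀ Ehat hE)
  have hspan : e₀ ∉ G.span ↑(F.image z') := fun h =>
    he₀ (G.span_subset_of_isFlat hP' (by simpa [Set.subset_def] using fun f _ => hz'mem f) h)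
  have hc := Δ.numComponents_le_card (↑F : Set E')
  rw [G.rank_insert_of_notMem_span hspan, Finset.coe_image, ← hz'rep, MGraph.graphicRk]
  omega

end ProjGeom

theorem stmt11_general {P N E' : Type*} [Fintype N] (G : ProjGeom P)
    (P' : Set P) (hP' : G.IsHyperplane P')
    (Δ : MGraph N E') (hΔ : Δ.IsSimple)
    (z' : E' → P) (hz'mem : ∀ f : E', z' f ∈ P')
    (hz'rep : ∀ S : Finset E', Δ.graphicRk (↑S : Set E') = G.rank (z' '' ↑S))
    (e₀ : P) (he₀ : e₀ ∉ P')
    (Ehat : Set P) (hne : e₀ ∉ Ehat)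
    (hE : ∀ x ∈ Ehat, ∃ f : E', x ∈ G.line (z' f) e₀) :
    (G.orthoGraph Δ z' e₀ Ehat hE).IsLinearClass (G.orthoBal Δ z' e₀ Ehat hE) ∧
    ∀ S : Finset (↥Ehat ⊕ Unit),
      (G.orthoGraph Δ z' e₀ Ehat hE).liftRk (G.orthoBal Δ z' e₀ Ehat hE)
          (↑S : Set (↥Ehat ⊕ Unit))
        = G.rank ((Sum.elim (Subtype.val : ↥Ehat → P) (fun _ : Unit => e₀)) '' ↑S) := by
  have hrep := G.representsLiftWith_orthoGraph hE Δ hP'.1 hz'mem hz'rep he₀ hne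
  exact ⟨hrep.isLinearClass_spanBal,
    hrep.liftRk_spanBal Subtype.val_injective fun e => hΔ.1 _⟩

/-- Let `P` be a projective geometry, `P'` a hyperplane, `Δ` a
nonempty simple graph, `z'` a projective representation of the graphic matroid
`G(Δ)` in `P'`, `e₀ ∈ P∖P'`, and `Ehat ⊆ Ê(Δ, e₀)∖{e₀}`.  Then the class of
balanced circles of the constructed graph is a linear class, so `Ω₀(Ehat)` is a
biased graph, and `e ↦ ê, e₀ ↦ ê₀` is a matroid isomorphism
`L₀(Ω₀(Ehat)) ≅ M(Ehat ∪ {ê₀})`. -/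
theorem stmt11 {P N E' : Type*} [Fintype N] [Nonempty N] (G : ProjGeom P)
    (P' : Set P) (hP' : G.IsHyperplane P')
    (Δ : MGraph N E') (hΔ : Δ.IsSimple)
    (z' : E' → P) (hz'mem : ∀ f : E', z' f ∈ P')
    (hz'inj : Function.Injective z')
    (hz'rep : ∀ S : Finset E', Δ.graphicRk (↑S : Set E') = G.rank (z' '' ↑S))
    (e₀ : P) (he₀ : e₀ ∉ P')
    (Ehat : Set P) (hne : e₀ ∉ Ehat)
    (hE : ∀ x ∈ Ehat, ∃ f : E', x ∈ G.line (z' f) e₀) :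
    (G.orthoGraph Δ z' e₀ Ehat hE).IsLinearClass (G.orthoBal Δ z' e₀ Ehat hE) ∧
    ∀ S : Finset (↥Ehat ⊕ Unit),
      (G.orthoGraph Δ z' e₀ Ehat hE).liftRk (G.orthoBal Δ z' e₀ Ehat hE)
          (↑S : Set (↥Ehat ⊕ Unit))
        = G.rank ((Sum.elim (Subtype.val : ↥Ehat → P) (fun _ : Unit => e₀)) '' ↑S) :=
  stmt11_general G P' hP' Δ hΔ z' hz'mem hz'rep e₀ he₀ Ehat hne hE
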